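/- arXiv:1507.07995 — 2 statements merged into one kernel-verified Lean document; each statement's English description precedes it below -/
import Mathlib

section
/- For all real numbers r > 0, k ≤ 0, n ≥ 2 a natural number, and t ∈ [0,1], one has (1-t)·log S((1-t)r; k) + t·log S(tr; k) − log S(r; k) − (t(1-t)/2)·(k/(n-1))·r² ≥ 0, where S(s;k) = sinh(s·√(−k/(n−1)))/(s·√(−k/(n−1))) for k < 0 and S(s;0) = 1 (with the convention S(0;k)=1). -/
/-- The comparison function `S(s;k)` for `k ≤ 0`: `sinh(s√(-k/(n-1)))/(s√(-k/(n-1)))`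
when `k < 0` and `s ≠ 0`, and `1` otherwise. -/
noncomputable def Scomp (n : ℕ) (k s : ℝ) : ℝ :=
  if k < 0 ∧ s ≠ 0 then
    Real.sinh (s * Real.sqrt (-k / (n - 1))) / (s * Real.sqrt (-k / (n - 1)))
  else 1

/-
Put `a = √(-k/(n-1))`, `x = t r a`, `y = (1-t) r a`, so that `x + y = r a` and
`S(s;k) = sinhc (s a)`. Multiplied by `r a`, the claim becomes `h (x + y) ≤ h x + h y` for
`h x = x log (sinhc x) - x³/6`, using `xy(x+y)/2 = ((x+y)³ - x³ - y³)/6`. Since `h 0 = 0`,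
this subadditivity follows from concavity of `h` on `[0, ∞)`, and concavity holds because
`x sinh² x · h'' x = -(sinh x - x cosh x)²` by `cosh² - sinh² = 1`.
-/

open Real Set

noncomputable def sinhc (x : ℝ) : ℝ := if x = 0 then 1 else sinh x / x

lemma sinhc_of_ne_zero {x : ℝ} (hx : x ≠ 0) : sinhc x = sinh x / x := if_neg hx

lemma sinhc_eq_dslope : sinhc = dslope sinh 0 := by
  ext
  simp [dslope, Function.update_apply, sinhc, slope, div_eq_inv_mul]

lemma continuous_sinhc : Continuous sinhc := by
  refine continuous_iff_continuousAt.mpr fun x ↦ ?_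
  rw [sinhc_eq_dslope]
  by_cases hx : x = 0
  · simp [hx]
  · rw [continuousAt_dslope_of_ne hx]
    fun_prop

lemma sinhc_pos (x : ℝ) : 0 < sinhc x := by
  rcases lt_trichotomy x 0 with hx | rfl | hx
  · rw [sinhc_of_ne_zero hx.ne]
    exact div_pos_of_neg_of_neg (sinh_neg_iff.mpr hx) hx
  · simp [sinhc]
  · rw [sinhc_of_ne_zero hx.ne']
    exact div_pos (sinh_pos_iff.mpr hx) hx

lemma hasDerivAt_log_sinhc {x : ℝ} (hx : x ≠ 0) :
    HasDerivAt (fun y ↦ log (sinhc y)) (cosh x / sinh x - x⁻¹) x := by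
  have hs : sinh x ≠ 0 := sinh_ne_zero.mpr hx
  have h : HasDerivAt (fun y ↦ log (sinh y) - log y) (cosh x / sinh x - x⁻¹) x :=
    ((hasDerivAt_sinh x).log hs).sub (hasDerivAt_log hx)
  refine h.congr_of_eventuallyEq ?_
  filter_upwards [isOpen_ne.mem_nhds hx] with y hy
  rw [sinhc_of_ne_zero hy, log_div (sinh_ne_zero.mpr hy) hy]

lemma hasDerivAt_coth_sub_inv {x : ℝ} (hx : x ≠ 0) :
    HasDerivAt (fun y ↦ cosh y / sinh y - y⁻¹) ((x ^ 2)⁻¹ - (sinh x ^ 2)⁻¹) x := by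
  have hs : sinh x ≠ 0 := sinh_ne_zero.mpr hx
  refine (((hasDerivAt_cosh x).div (hasDerivAt_sinh x) hs).sub
    (hasDerivAt_inv hx)).congr_deriv ?_
  field_simp
  linear_combination (-x ^ 2) * cosh_sq_sub_sinh_sq x

lemma two_mul_coth_sub_inv_add_le {x : ℝ} (hx : 0 < x) :
    2 * (cosh x / sinh x - x⁻¹) + x * ((x ^ 2)⁻¹ - (sinh x ^ 2)⁻¹) ≤ x := by
  have hs : 0 < sinh x := sinh_pos_iff.mpr hx
  have h : x - (2 * (cosh x / sinh x - x⁻¹) + x * ((x ^ 2)⁻¹ - (sinh x ^ 2)⁻¹))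
      = (sinh x - x * cosh x) ^ 2 / (x * sinh x ^ 2) := by
    field_simp
    linear_combination (-x ^ 2) * cosh_sq_sub_sinh_sq x
  have : 0 ≤ (sinh x - x * cosh x) ^ 2 / (x * sinh x ^ 2) := by positivity
  linarith

lemma concaveOn_mul_log_sinhc_sub_cube :
    ConcaveOn ℝ (Ici 0) (fun x ↦ x * log (sinhc x) - x ^ 3 / 6) := by
  have hcont : Continuous (fun x ↦ x * log (sinhc x) - x ^ 3 / 6) := by
    have := continuous_sinhc.log fun x ↦ (sinhc_pos x).ne'
    fun_prop
  refine concaveOn_of_hasDerivWithinAt2_nonpos (convex_Ici 0) hcont.continuousOn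
    (f' := fun x ↦ log (sinhc x) + x * (cosh x / sinh x - x⁻¹) - x ^ 2 / 2)
    (f'' := fun x ↦ 2 * (cosh x / sinh x - x⁻¹) + x * ((x ^ 2)⁻¹ - (sinh x ^ 2)⁻¹) - x)
    ?_ ?_ ?_ <;> rw [interior_Ici] <;> intro x (hx : 0 < x)
  · refine HasDerivAt.hasDerivWithinAt ?_
    refine (((hasDerivAt_id x).mul (hasDerivAt_log_sinhc hx.ne')).sub
      ((hasDerivAt_pow 3 x).div_const 6)).congr_deriv ?_
    simp only [id_eq]
    ring
  · refine HasDerivAt.hasDerivWithinAt ?_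
    refine (((hasDerivAt_log_sinhc hx.ne').add ((hasDerivAt_id x).mul
      (hasDerivAt_coth_sub_inv hx.ne'))).sub ((hasDerivAt_pow 2 x).div_const 2)).congr_deriv ?_
    simp only [id_eq]
    ring
  · linarith [two_mul_coth_sub_inv_add_le hx]

lemma ConcaveOn.map_add_add_map_zero_le {f : ℝ → ℝ} (hf : ConcaveOn ℝ (Ici 0) f)
    {x y : ℝ} (hx : 0 ≤ x) (hy : 0 ≤ y) : f (x + y) + f 0 ≤ f x + f y := by
  rcases (add_nonneg hx hy).eq_or_lt with hs | hs
  · obtain rfl : x = 0 := by linarith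
    obtain rfl : y = 0 := by linarith
    simp
  -- each of `x`, `y` is a convex combination of `0` and `x + y`
  have hx' := hf.2 self_mem_Ici hs.le (div_nonneg hy hs.le) (div_nonneg hx hs.le)
    (by field_simp; ring)
  have hy' := hf.2 self_mem_Ici hs.le (div_nonneg hx hs.le) (div_nonneg hy hs.le)
    (by field_simp)
  simp only [smul_eq_mul, mul_zero, zero_add] at hx' hy'
  rw [div_mul_cancel₀ _ hs.ne'] at hx' hy'
  have : (y / (x + y)) * f 0 + (x / (x + y)) * f (x + y)
      + ((x / (x + y)) * f 0 + (y / (x + y)) * f (x + y)) = f (x + y) + f 0 := by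
    field_simp; ring
  linarith

lemma Scomp_eq_sinhc {n : ℕ} (hn : 1 < n) {k : ℝ} (hk : k < 0) (s : ℝ) :
    Scomp n k s = sinhc (s * √(-k / (n - 1))) := by
  have ha : 0 < √(-k / (n - 1)) := by
    have : (1 : ℝ) < n := by exact_mod_cast hn
    apply sqrt_pos.mpr
    apply div_pos <;> linarith
  by_cases hs : s = 0
  · simp [Scomp, sinhc, hs]
  · rw [Scomp, if_pos ⟨hk, hs⟩, sinhc_of_ne_zero (mul_ne_zero hs ha.ne')]

theorem stmt0 (n : ℕ) (hn : 2 ≤ n) (r k t : ℝ) (hr : 0 < r) (hk : k ≤ 0)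
    (ht : t ∈ Set.Icc (0 : ℝ) 1) :
    0 ≤ (1 - t) * Real.log (Scomp n k ((1 - t) * r)) + t * Real.log (Scomp n k (t * r))
      - Real.log (Scomp n k r) - (t * (1 - t) / 2) * (k / (n - 1)) * r ^ 2 := by
  obtain ⟨ht0, ht1⟩ := ht
  rcases hk.eq_or_lt with rfl | hk
  · simp [Scomp]
  have hn' : (1 : ℝ) < n := by exact_mod_cast hn
  simp only [Scomp_eq_sinhc hn hk]
  have hpos : 0 < -k / (n - 1) := div_pos (by linarith) (by linarith)
  set a := √(-k / (n - 1))
  have ha : 0 < a := sqrt_pos.mpr hpos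
  have hka : k / (n - 1) = -a ^ 2 := by rw [sq_sqrt hpos.le, neg_div, neg_neg]
  have key := concaveOn_mul_log_sinhc_sub_cube.map_add_add_map_zero_le
    (by positivity : 0 ≤ t * r * a)
    (mul_nonneg (mul_nonneg (sub_nonneg.2 ht1) hr.le) ha.le)
  rw [show t * r * a + (1 - t) * r * a = r * a by ring] at key
  refine nonneg_of_mul_nonneg_right (a := r * a) ?_ (mul_pos hr ha)
  rw [hka]
  linear_combination key
end

section
/- For t ∈ [0,1] and s ≥ 0, letting f(s) = log(sinh(s)/s) (with f(0) = 0), one has (1−t)·f((1−t)s) + t·f(ts) − f(s) ≥ −(t(1−t)/2)·s². -/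
/-!
The function `u ↦ log (sinh u / u) - u ^ 2 / 6` is nonincreasing on `(0, ∞)`: its derivative
`coth u - 1 / u - u / 3` is nonpositive, i.e. `u cosh u ≤ (1 + u ^ 2 / 3) sinh u`, which follows by
differentiating twice. Comparing its values at `(1 - t) s` and `t s` with the value at `s` and
weighting by `1 - t` and `t` gives the inequality, since `(1 - t)³ + t³ - 1 = -3 t (1 - t)`.
-/

open Real Set

lemma mul_sinh_nonneg (x : ℝ) : 0 ≤ x * sinh x := by
  rcases le_total 0 x with hx | hx
  · exact mul_nonneg hx (sinh_nonneg_iff.2 hx)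
  · exact mul_nonneg_of_nonpos_of_nonpos hx (sinh_nonpos_iff.2 hx)

lemma monotone_mul_cosh_sub_sinh : Monotone fun x : ℝ => x * cosh x - sinh x :=
  monotone_of_hasDerivAt_nonneg
    (fun x => (((hasDerivAt_id x).mul (hasDerivAt_cosh x)).sub (hasDerivAt_sinh x)).congr_deriv
      (by simp only [id_eq]; ring))
    mul_sinh_nonneg

lemma mul_mul_cosh_sub_sinh_nonneg (x : ℝ) : 0 ≤ x * (x * cosh x - sinh x) := by
  rcases le_total 0 x with hx | hx
  · exact mul_nonneg hx (by simpa using monotone_mul_cosh_sub_sinh hx)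
  · exact mul_nonneg_of_nonpos_of_nonpos hx (by simpa using monotone_mul_cosh_sub_sinh hx)

lemma monotone_sinh_mul_sub_mul_cosh :
    Monotone fun x : ℝ => (1 + x ^ 2 / 3) * sinh x - x * cosh x := by
  refine monotone_of_hasDerivAt_nonneg (f' := fun x => x * (x * cosh x - sinh x) / 3)
    (fun x => ?_) fun x => div_nonneg (mul_mul_cosh_sub_sinh_nonneg x) zero_le_three
  refine (((((hasDerivAt_pow 2 x).div_const 3).const_add 1).mul (hasDerivAt_sinh x)).sub
    ((hasDerivAt_id' x).mul (hasDerivAt_cosh x))).congr_deriv ?_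
  push_cast
  ring

lemma mul_cosh_le {x : ℝ} (hx : 0 ≤ x) : x * cosh x ≤ (1 + x ^ 2 / 3) * sinh x := by
  simpa using monotone_sinh_mul_sub_mul_cosh hx

lemma antitoneOn_log_sinh_sub_log_sub_sq :
    AntitoneOn (fun u : ℝ => log (sinh u) - log u - u ^ 2 / 6) (Ioi 0) := by
  have hderiv : ∀ x ∈ Ioi (0 : ℝ), HasDerivAt (fun u : ℝ => log (sinh u) - log u - u ^ 2 / 6)
      (cosh x / sinh x - x⁻¹ - x / 3) x := fun x hx => by
    refine ((((hasDerivAt_sinh x).log (sinh_pos_iff.2 hx).ne').sub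
      (hasDerivAt_log (ne_of_gt hx))).sub ((hasDerivAt_pow 2 x).div_const 6)).congr_deriv ?_
    push_cast
    ring
  refine antitoneOn_of_hasDerivWithinAt_nonpos (convex_Ioi 0)
    (fun x hx => (hderiv x hx).continuousAt.continuousWithinAt)
    (fun x hx => (hderiv x (interior_subset hx)).hasDerivWithinAt) fun x hx => ?_
  rw [interior_Ioi, mem_Ioi] at hx
  have hsinh : 0 < sinh x := sinh_pos_iff.2 hx
  have hcoth : cosh x / sinh x ≤ x⁻¹ + x / 3 := by
    rw [div_le_iff₀ hsinh]
    have := mul_cosh_le hx.le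
    field_simp
    nlinarith
  linarith

lemma log_sinh_div_self_sub_le {a b : ℝ} (ha : 0 < a) (hab : a ≤ b) :
    log (sinh b / b) - log (sinh a / a) ≤ (b ^ 2 - a ^ 2) / 6 := by
  have hb := ha.trans_le hab
  have h := antitoneOn_log_sinh_sub_log_sub_sq ha hb hab
  rw [log_div (sinh_pos_iff.2 hb).ne' hb.ne', log_div (sinh_pos_iff.2 ha).ne' ha.ne']
  linarith

theorem stmt10 (t s : ℝ) (ht : t ∈ Set.Icc (0 : ℝ) 1) (hs : 0 ≤ s)
    (f : ℝ → ℝ) (hf : f = fun u => if u = 0 then 0 else Real.log (Real.sinh u / u)) :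
    (1 - t) * f ((1 - t) * s) + t * f (t * s) - f s ≥ -(t * (1 - t) / 2) * s ^ 2 := by
  subst hf
  obtain ⟨ht0, ht1⟩ := ht
  rcases hs.eq_or_lt with rfl | hs_pos
  · simp
  rcases ht0.eq_or_lt with rfl | ht_pos
  · simp
  rcases ht1.eq_or_lt with rfl | ht_lt
  · simp
  have hu : 0 < (1 - t) * s := mul_pos (sub_pos.2 ht_lt) hs_pos
  have hv : 0 < t * s := mul_pos ht_pos hs_pos
  have h1 := log_sinh_div_self_sub_le (b := s) hu (by nlinarith)
  have h2 := log_sinh_div_self_sub_le (b := s) hv (by nlinarith)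
  simp only [hu.ne', hv.ne', hs_pos.ne', if_false, ge_iff_le]
  linear_combination (1 - t) * h1 + t * h2
end
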